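/- arXiv:2503.11821 — 2 statements merged into one kernel-verified Lean document; each statement's English description precedes it below -/
import Mathlib

section
/- In the market M_k, let q ∈ (0,1] satisfy ⌈kq⌉ = 2. Then for every preference P2 of doctor d2, the q-quantile stable mechanism assigns contract x² to doctor d1 at the profile (P1, P2); hence the option set of d1 at P1 under φ^q is O^{φ^q}(P1) = {x²}. -/
/-- A one-to-one matching market with contracts: a finite set `X` of contracts,
finite sets `D` of doctors and `H` of hospitals, maps assigning to each contract
its doctor and its hospital, and fixed, publicly known hospital preferences
(strict linear orders over the hospital's contracts together with `none` = ∅). -/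
structure Market where
  X : Type
  D : Type
  H : Type
  [fintypeX : Fintype X]
  [fintypeD : Fintype D]
  [fintypeH : Fintype H]
  [decEqX : DecidableEq X]
  [decEqD : DecidableEq D]
  [decEqH : DecidableEq H]
  doc : X → D
  hos : X → H
  hpref : ∀ h : H, LinearOrder (Option {x : X // hos x = h})

attribute [instance] Market.fintypeX Market.fintypeD Market.fintypeH
attribute [instance] Market.decEqX Market.decEqD Market.decEqH

namespace Market

variable (M : Market)

/-- The contracts involving doctor `d`. -/
abbrev Xd (d : M.D) : Type := {x : M.X // M.doc x = d}

/-- The contracts involving hospital `h`. -/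
abbrev Xh (h : M.H) : Type := {x : M.X // M.hos x = h}

/-- A (strict) preference for doctor `d`: a linear order on `X_d ∪ {∅}`,
where `none` plays the role of ∅ and "larger" means "more preferred". -/
abbrev DocPref (d : M.D) : Type := LinearOrder (Option (M.Xd d))

/-- A profile of doctor preferences. -/
abbrev Prof : Type := ∀ d : M.D, M.DocPref d

/-- `Y` is an allocation: distinct contracts of `Y` involve distinct doctors and
distinct hospitals. -/
def IsAllocation (Y : Finset M.X) : Prop :=
  ∀ x ∈ Y, ∀ y ∈ Y, x ≠ y → M.doc x ≠ M.doc y ∧ M.hos x ≠ M.hos y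

/-- `Y_d`: the contract of `Y` involving doctor `d` (there is a unique one when `Y`
is an allocation), or `none` (= ∅) if there is none. -/
noncomputable def allocD (Y : Finset M.X) (d : M.D) : Option (M.Xd d) :=
  if h : ∃ x ∈ Y, M.doc x = d then some ⟨h.choose, h.choose_spec.2⟩ else none

/-- `Y_h`: the contract of `Y` involving hospital `h`, or `none` (= ∅) if there is none. -/
noncomputable def allocH (Y : Finset M.X) (h : M.H) : Option (M.Xh h) :=
  if hh : ∃ x ∈ Y, M.hos x = h then some ⟨hh.choose, hh.choose_spec.2⟩ else none

/-- Individual rationality: every agent weakly prefers its assignment to ∅. -/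
def IndividuallyRational (P : M.Prof) (Y : Finset M.X) : Prop :=
  (∀ d : M.D, (P d).le none (M.allocD Y d)) ∧
  (∀ h : M.H, (M.hpref h).le none (M.allocH Y h))

/-- Contract `x` blocks `Y`: `x ∉ Y` and both the doctor and the hospital of `x`
strictly prefer `x` to their assignment under `Y`. -/
def Blocks (P : M.Prof) (Y : Finset M.X) (x : M.X) : Prop :=
  x ∉ Y ∧ (P (M.doc x)).lt (M.allocD Y (M.doc x)) (some ⟨x, rfl⟩) ∧
    (M.hpref (M.hos x)).lt (M.allocH Y (M.hos x)) (some ⟨x, rfl⟩)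

/-- `Y` is stable: it is an individually rational allocation and no contract blocks it. -/
def IsStable (P : M.Prof) (Y : Finset M.X) : Prop :=
  M.IsAllocation Y ∧ M.IndividuallyRational P Y ∧ ∀ x : M.X, ¬ M.Blocks P Y x

/-- A (matching) mechanism: a map from doctor-preference profiles to sets of contracts. -/
abbrev Mech : Type := M.Prof → Finset M.X

/-- `φ_d(P)`: the contract assigned to doctor `d` by mechanism `φ` at profile `P`. -/
noncomputable def assign (φ : M.Mech) (P : M.Prof) (d : M.D) : Option (M.Xd d) :=
  M.allocD (φ P) d

/-- `Pd'` is a manipulation of `φ` at true preference `Pd` for doctor `d`: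
for some subprofile of the other doctors, reporting `Pd'` yields an outcome that
`d` strictly prefers (under the true `Pd`) to the outcome from reporting `Pd`. -/
def IsManipulation (φ : M.Mech) (d : M.D) (Pd Pd' : M.DocPref d) : Prop :=
  ∃ P : M.Prof,
    Pd.lt (M.assign φ (Function.update P d Pd) d) (M.assign φ (Function.update P d Pd') d)

/-- `φ` is non-manipulable (strategy-proof). -/
def NonManipulable (φ : M.Mech) : Prop :=
  ∀ (d : M.D) (Pd Pd' : M.DocPref d), ¬ M.IsManipulation φ d Pd Pd'

/-- The option set `O^φ(Pd)` left open by report `Pd` of doctor `d`. -/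
def optionSet (φ : M.Mech) (d : M.D) (Pd : M.DocPref d) : Set (Option (M.Xd d)) :=
  {o | ∃ P : M.Prof, o = M.assign φ (Function.update P d Pd) d}

/-- `a` is the `Pd`-worst element of `S` (i.e. `a = W_d(Pd, S)`). -/
def IsWorst (d : M.D) (Pd : M.DocPref d) (S : Set (Option (M.Xd d)))
    (a : Option (M.Xd d)) : Prop :=
  a ∈ S ∧ ∀ b ∈ S, Pd.le a b

/-- `a` is the `Pd`-best element of `S` (i.e. `a = C_d(Pd, S)`). -/
def IsBest (d : M.D) (Pd : M.DocPref d) (S : Set (Option (M.Xd d)))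
    (a : Option (M.Xd d)) : Prop :=
  a ∈ S ∧ ∀ b ∈ S, Pd.le b a

/-- `Pd'` is an obvious manipulation of `φ` at `Pd`: it is a manipulation and either
`W_d(Pd, O^φ(Pd')) P_d W_d(Pd, O^φ(Pd))` or `C_d(Pd, O^φ(Pd')) P_d C_d(Pd, O^φ(Pd))`. -/
def IsObviousManipulation (φ : M.Mech) (d : M.D) (Pd Pd' : M.DocPref d) : Prop :=
  M.IsManipulation φ d Pd Pd' ∧
    ((∃ a b, M.IsWorst d Pd (M.optionSet φ d Pd') a ∧
        M.IsWorst d Pd (M.optionSet φ d Pd) b ∧ Pd.lt b a) ∨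
     (∃ a b, M.IsBest d Pd (M.optionSet φ d Pd') a ∧
        M.IsBest d Pd (M.optionSet φ d Pd) b ∧ Pd.lt b a))

/-- `φ` is not obviously manipulable (NOM). -/
def NOM (φ : M.Mech) : Prop :=
  ∀ (d : M.D) (Pd Pd' : M.DocPref d), ¬ M.IsObviousManipulation φ d Pd Pd'

open Classical in
/-- The (finite) set of all stable allocations at profile `P`. -/
noncomputable def stableSet (P : M.Prof) : Finset (Finset M.X) :=
  @Finset.filter _ (fun Y => M.IsStable P Y) (Classical.decPred _) Finset.univ

/-- The list of doctor `d`'s assignments across all stable allocations at `P`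
(with multiplicity), ordered from best to worst according to `P d`. -/
noncomputable def sortedStable (P : M.Prof) (d : M.D) : List (Option (M.Xd d)) :=
  letI := P d
  ((M.stableSet P).val.map (fun Y => M.allocD Y d)).sort (· ≥ ·)

/-- `X^{(j)}_d`: doctor `d`'s `j`-th best stable assignment at `P` (for `1 ≤ j ≤ k`,
`k` the number of stable allocations). -/
noncomputable def nthBest (P : M.Prof) (d : M.D) (j : ℕ) : Option (M.Xd d) :=
  ((M.sortedStable P d)[j - 1]?).join

/-- The `j`-th quantile stable allocation `X^{(j)} = ⋃_{d ∈ D} X^{(j)}_d` at `P`. -/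
noncomputable def quantileAlloc (P : M.Prof) (j : ℕ) : Finset M.X :=
  Finset.univ.filter (fun x => M.nthBest P (M.doc x) j = some ⟨x, rfl⟩)

/-- The `q`-quantile stable mechanism `φ^q`: at a profile with `k` stable allocations
it selects the `⌈kq⌉`-th quantile stable allocation (with `⌈0⌉` taken to be `1`). -/
noncomputable def quantileMech (q : ℝ) : M.Mech :=
  fun P => M.quantileAlloc P (max 1 ⌈((M.stableSet P).card : ℝ) * q⌉₊)

/-- `Y` is the doctor-optimal stable allocation at `P`: it is stable and every doctor
weakly prefers it to every other stable allocation. -/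
def IsDoctorOptimal (P : M.Prof) (Y : Finset M.X) : Prop :=
  M.IsStable P Y ∧
    ∀ Z : Finset M.X, M.IsStable P Z → ∀ d : M.D, (P d).le (M.allocD Z d) (M.allocD Y d)

/-- `Y` is the hospital-optimal stable allocation at `P`. -/
def IsHospitalOptimal (P : M.Prof) (Y : Finset M.X) : Prop :=
  M.IsStable P Y ∧
    ∀ Z : Finset M.X, M.IsStable P Z → ∀ h : M.H, (M.hpref h).le (M.allocH Z h) (M.allocH Y h)

end Market

namespace MkMarket

/-- Doctor map for the market `M_k`: contracts `x^t` (encoded `Sum.inl t`) belong to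
doctor `d1 = false`; contract `w` (encoded `Sum.inr ()`) belongs to doctor `d2 = true`. -/
def mdoc (k : ℕ) : (Fin k ⊕ Unit) → Bool := Sum.elim (fun _ => false) (fun _ => true)

/-- Hospital map for the market `M_k`: each `x^t` involves hospital `h1 = false`
and `w` involves hospital `h2 = true`. -/
def mhos (k : ℕ) : (Fin k ⊕ Unit) → Bool := Sum.elim (fun _ => false) (fun _ => true)

/-- Ranking realizing the fixed hospital preferences of `M_k`:
`h1` ranks `x^k P x^{k-1} P … P x^1 P ∅`, and `h2` ranks `w P ∅`. -/
def hrank (k : ℕ) (h : Bool) : Option {x : Fin k ⊕ Unit // mhos k x = h} → ℕ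
  | none => 0
  | some ⟨Sum.inl t, _⟩ => t.val + 1
  | some ⟨Sum.inr _, _⟩ => 1

lemma hrank_injective (k : ℕ) (h : Bool) : Function.Injective (hrank k h) := by
  rintro (_ | ⟨(t | u), hx⟩) (_ | ⟨(s | v), hy⟩) hab <;>
    simp only [hrank] at hab
  · rfl
  · omega
  · exact absurd hab (by omega)
  · omega
  · have : t = s := Fin.ext (by omega)
    subst this; rfl
  · exact Bool.noConfusion (hx.trans hy.symm)
  · exact absurd hab (by omega)
  · exact Bool.noConfusion (hy.trans hx.symm)
  · rfl

/-- The market `M_k` of the proof of the Theorem: doctors `d1 = false`, `d2 = true`,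
hospitals `h1 = false`, `h2 = true`, contracts `x^1, …, x^k` (encoded as `Sum.inl 0, …,
Sum.inl (k-1)`) between `d1` and `h1`, and `w` (encoded `Sum.inr ()`) between `d2` and `h2`;
hospital preferences: `x^k P … P x^1 P ∅` for `h1` and `w P ∅` for `h2`. -/
def Mk (k : ℕ) : Market where
  X := Fin k ⊕ Unit
  D := Bool
  H := Bool
  doc := mdoc k
  hos := mhos k
  hpref h := LinearOrder.lift' (hrank k h) (hrank_injective k h)

/-- The contract `x^{t+1}` of `M_k`, viewed as a contract of doctor `d1 = false`. -/
def xC (k : ℕ) (t : Fin k) : (Mk k).Xd false := ⟨Sum.inl t, rfl⟩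

/-- The contract `w` of `M_k`, viewed as a contract of doctor `d2 = true`. -/
def wC (k : ℕ) : (Mk k).Xd true := ⟨Sum.inr (), rfl⟩

/-- Ranking realizing `d1`'s true preference `P1 = x^1, x^2, …, x^k` (then ∅). -/
def drank1 (k : ℕ) : Option ((Mk k).Xd false) → ℕ
  | none => 0
  | some ⟨Sum.inl t, _⟩ => k - t.val
  | some ⟨Sum.inr _, _⟩ => 0

lemma drank1_injective (k : ℕ) : Function.Injective (drank1 k) := by
  rintro (_ | ⟨(t | u), hx⟩) (_ | ⟨(s | v), hy⟩) hab <;>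
    simp only [drank1] at hab
  · rfl
  · have := s.isLt; omega
  · exact Bool.noConfusion hy
  · have := t.isLt; omega
  · have h1 := t.isLt; have h2 := s.isLt
    have : t = s := Fin.ext (by omega)
    subst this; rfl
  · exact Bool.noConfusion hy
  · exact Bool.noConfusion hx
  · exact Bool.noConfusion hx
  · exact Bool.noConfusion hx

/-- `d1`'s true preference `P1`: `x^1 P x^2 P … P x^k P ∅`. -/
def P1 (k : ℕ) : (Mk k).DocPref false :=
  LinearOrder.lift' (drank1 k) (drank1_injective k)

/-- `Q` is the truncated preference `P1'` of `d1`: it ranks `x^1 P ∅` and declares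
every other contract unacceptable (`∅ P x^t` for all `t ≠ 1`). -/
def IsTruncation (k : ℕ) (hk : 0 < k) (Q : (Mk k).DocPref false) : Prop :=
  Q.lt none (some (xC k ⟨0, hk⟩)) ∧
    ∀ t : Fin k, t.val ≠ 0 → Q.lt (some (xC k t)) none

/-- Ranking realizing the truncated preference `P1' = x^1` (then ∅, then the rest). -/
def drank1' (k : ℕ) : Option ((Mk k).Xd false) → ℕ
  | none => k
  | some ⟨Sum.inl t, _⟩ => if t.val = 0 then k + 1 else k - t.val
  | some ⟨Sum.inr _, _⟩ => 0

lemma drank1'_injective (k : ℕ) : Function.Injective (drank1' k) := by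
  rintro (_ | ⟨(t | u), hx⟩) (_ | ⟨(s | v), hy⟩) hab <;>
    simp only [drank1'] at hab
  · rfl
  · have := s.isLt; split_ifs at hab <;> omega
  · exact Bool.noConfusion hy
  · have := t.isLt; split_ifs at hab <;> omega
  · have h1 := t.isLt; have h2 := s.isLt
    have : t = s := Fin.ext (by split_ifs at hab <;> omega)
    subst this; rfl
  · exact Bool.noConfusion hy
  · exact Bool.noConfusion hx
  · exact Bool.noConfusion hx
  · exact Bool.noConfusion hx

/-- A concrete realization of the truncated preference `P1'`. -/
def P1' (k : ℕ) : (Mk k).DocPref false :=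
  LinearOrder.lift' (drank1' k) (drank1'_injective k)

/-- The profile `(Q1, Q2)` of doctor preferences in `M_k`. -/
def prof (k : ℕ) (Q1 : (Mk k).DocPref false) (Q2 : (Mk k).DocPref true) : (Mk k).Prof :=
  fun d => match d with
  | false => Q1
  | true => Q2

end MkMarket

namespace Market

variable (M : Market)

lemma allocD_eq_some' (Y : Finset M.X) (d : M.D) (x : M.X) (hx : x ∈ Y) (hd : M.doc x = d)
    (huniq : ∀ y ∈ Y, M.doc y = d → y = x) : M.allocD Y d = some ⟨x, hd⟩ := by
  have hex : ∃ z ∈ Y, M.doc z = d := ⟨x, hx, hd⟩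
  rw [allocD, dif_pos hex]
  exact congrArg some (Subtype.ext (huniq _ hex.choose_spec.1 hex.choose_spec.2))

lemma allocD_eq_none' (Y : Finset M.X) (d : M.D) (h : ∀ x ∈ Y, M.doc x ≠ d) :
    M.allocD Y d = none := by
  rw [allocD, dif_neg]
  rintro ⟨x, hx, hd⟩; exact h x hx hd

lemma allocH_eq_some' (Y : Finset M.X) (hh : M.H) (x : M.X) (hx : x ∈ Y) (hd : M.hos x = hh)
    (huniq : ∀ y ∈ Y, M.hos y = hh → y = x) : M.allocH Y hh = some ⟨x, hd⟩ := by
  have hex : ∃ z ∈ Y, M.hos z = hh := ⟨x, hx, hd⟩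
  rw [allocH, dif_pos hex]
  exact congrArg some (Subtype.ext (huniq _ hex.choose_spec.1 hex.choose_spec.2))

lemma allocH_eq_none' (Y : Finset M.X) (hh : M.H) (h : ∀ x ∈ Y, M.hos x ≠ hh) :
    M.allocH Y hh = none := by
  rw [allocH, dif_neg]
  rintro ⟨x, hx, hd⟩; exact h x hx hd

end Market

namespace MkMarket

variable {k : ℕ}

open Classical in
/-- The candidate stable allocations. -/
noncomputable def Sa (P2 : (Mk k).DocPref true) (t : Fin k) : Finset ((Mk k).X) :=
  if P2.lt none (some (wC k)) then {Sum.inl t, Sum.inr ()} else {Sum.inl t}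

lemma mem_Sa {P2 : (Mk k).DocPref true} {t : Fin k} {x : (Mk k).X} :
    x ∈ Sa P2 t ↔ x = Sum.inl t ∨ (P2.lt none (some (wC k)) ∧ x = Sum.inr ()) := by
  unfold Sa
  split_ifs with h
  · refine ((Finset.mem_insert (α := (Mk k).X) (s := {(Sum.inr () : (Mk k).X)}) (a := x)
      (b := (Sum.inl t : (Mk k).X))).trans (or_congr Iff.rfl Finset.mem_singleton)).trans ?_; tauto
  · refine (Finset.mem_singleton (α := (Mk k).X) (a := (Sum.inl t : (Mk k).X)) (b := x)).trans ?_; tauto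

lemma allocD_Sa_false (P2 : (Mk k).DocPref true) (t : Fin k) :
    (Mk k).allocD (Sa P2 t) false = some (xC k t) := by
  apply Market.allocD_eq_some' (Mk k) _ _ (Sum.inl t) (mem_Sa.mpr (Or.inl rfl)) rfl
  intro y hy hdy
  rcases mem_Sa.mp hy with h | ⟨_, h⟩
  · exact h
  · subst h; exact absurd hdy (by simp [Mk, mdoc])

lemma allocD_Sa_true (P2 : (Mk k).DocPref true) (t : Fin k) :
    (Mk k).allocD (Sa P2 t) true =
      if P2.lt none (some (wC k)) then some (wC k) else none := by
  split_ifs with h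
  · apply Market.allocD_eq_some' (Mk k) _ _ (Sum.inr ()) (mem_Sa.mpr (Or.inr ⟨h, rfl⟩)) rfl
    intro y hy hdy
    rcases mem_Sa.mp hy with h' | ⟨_, h'⟩
    · subst h'; exact absurd hdy (by simp [Mk, mdoc])
    · exact h'
  · apply Market.allocD_eq_none'
    intro y hy hdy
    rcases mem_Sa.mp hy with h' | ⟨h', _⟩
    · subst h'; exact absurd hdy (by simp [Mk, mdoc])
    · exact h h'

lemma allocH_Sa_false (P2 : (Mk k).DocPref true) (t : Fin k) :
    (Mk k).allocH (Sa P2 t) false = some ⟨Sum.inl t, rfl⟩ := by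
  apply Market.allocH_eq_some' (Mk k) _ _ (Sum.inl t) (mem_Sa.mpr (Or.inl rfl)) rfl
  intro y hy hdy
  rcases mem_Sa.mp hy with h | ⟨_, h⟩
  · exact h
  · subst h; exact absurd hdy (by simp [Mk, mhos])

lemma allocH_Sa_true (P2 : (Mk k).DocPref true) (t : Fin k) :
    (Mk k).allocH (Sa P2 t) true =
      if P2.lt none (some (wC k)) then some ⟨Sum.inr (), rfl⟩ else none := by
  split_ifs with h
  · apply Market.allocH_eq_some' (Mk k) _ _ (Sum.inr ()) (mem_Sa.mpr (Or.inr ⟨h, rfl⟩)) rfl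
    intro y hy hdy
    rcases mem_Sa.mp hy with h' | ⟨_, h'⟩
    · subst h'; exact absurd hdy (by simp [Mk, mhos])
    · exact h'
  · apply Market.allocH_eq_none'
    intro y hy hdy
    rcases mem_Sa.mp hy with h' | ⟨h', _⟩
    · subst h'; exact absurd hdy (by simp [Mk, mhos])
    · exact h h'

lemma isStable_Sa (P2 : (Mk k).DocPref true) (t : Fin k) :
    (Mk k).IsStable (prof k (P1 k) P2) (Sa P2 t) := by
  refine ⟨?_, ⟨?_, ?_⟩, ?_⟩
  · intro x hx y hy hne
    rcases mem_Sa.mp hx with rfl | ⟨_, rfl⟩ <;> rcases mem_Sa.mp hy with rfl | ⟨_, rfl⟩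
    · exact absurd rfl hne
    · exact ⟨by simp [Mk, mdoc], by simp [Mk, mhos]⟩
    · exact ⟨by simp [Mk, mdoc], by simp [Mk, mhos]⟩
    · exact absurd rfl hne
  · intro d
    cases d with
    | false =>
      rw [allocD_Sa_false]
      show drank1 k none ≤ drank1 k (some (xC k t))
      exact Nat.zero_le _
    | true =>
      rw [allocD_Sa_true]
      split_ifs with h
      · letI := P2; exact le_of_lt h
      · letI := P2; exact le_refl none
  · intro h
    cases h with
    | false =>
      rw [allocH_Sa_false]
      show hrank k false none ≤ hrank k false (some ⟨Sum.inl t, rfl⟩)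
      exact Nat.zero_le _
    | true =>
      rw [allocH_Sa_true]
      split_ifs with h
      · show hrank k true none ≤ hrank k true (some ⟨Sum.inr (), rfl⟩)
        exact Nat.zero_le _
      · show hrank k true none ≤ hrank k true none
        exact Nat.le_refl _
  · rintro x ⟨hnotin, hd, hh⟩
    rcases x with t' | u
    · have hd' : drank1 k ((Mk k).allocD (Sa P2 t) false) <
          drank1 k (some ⟨Sum.inl t', rfl⟩) := hd
      have hh' : hrank k false ((Mk k).allocH (Sa P2 t) false) <
          hrank k false (some ⟨Sum.inl t', rfl⟩) := hh
      rw [allocD_Sa_false] at hd'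
      rw [allocH_Sa_false] at hh'
      have hd2 : k - t.val < k - t'.val := hd'
      have hh2 : t.val + 1 < t'.val + 1 := hh' 

      have := t.isLt
      omega
    · cases u
      have hd' : P2.lt ((Mk k).allocD (Sa P2 t) true) (some (wC k)) := hd
      rw [allocD_Sa_true] at hd'
      split_ifs at hd' with h
      · exact hnotin (mem_Sa.mpr (Or.inr ⟨h, rfl⟩))
      · exact h hd' 

lemma stable_eq_Sa (hk : 0 < k) (P2 : (Mk k).DocPref true) (Y : Finset ((Mk k).X))
    (hY : (Mk k).IsStable (prof k (P1 k) P2) Y) : ∃ t, Y = Sa P2 t := by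
  obtain ⟨halloc, ⟨hIRd, hIRh⟩, hblock⟩ := hY
  -- some x^t is in Y
  have hex : ∃ t : Fin k, Sum.inl t ∈ Y := by
    by_contra hno
    push_neg at hno
    have hD : (Mk k).allocD Y false = none := by
      apply Market.allocD_eq_none'
      rintro (s | u) hx hd
      · exact hno s hx
      · exact absurd hd (by simp [Mk, mdoc])
    have hH : (Mk k).allocH Y false = none := by
      apply Market.allocH_eq_none'
      rintro (s | u) hx hd
      · exact hno s hx
      · exact absurd hd (by simp [Mk, mhos])
    refine hblock (Sum.inl ⟨0, hk⟩) ⟨hno _, ?_, ?_⟩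
    · show drank1 k ((Mk k).allocD Y false) < drank1 k (some ⟨Sum.inl ⟨0, hk⟩, rfl⟩)
      rw [hD]
      show 0 < k - 0
      omega
    · show hrank k false ((Mk k).allocH Y false) < hrank k false (some ⟨Sum.inl ⟨0, hk⟩, rfl⟩)
      rw [hH]
      show 0 < 0 + 1
      omega
  obtain ⟨t, ht⟩ := hex
  have huniq : ∀ s : Fin k, Sum.inl s ∈ Y → s = t := by
    intro s hs
    by_contra hne
    exact (halloc _ hs _ ht (fun h => hne (Sum.inl.inj h))).2 rfl
  -- w membership
  have hwiff : (Sum.inr () : (Mk k).X) ∈ Y ↔ P2.lt none (some (wC k)) := by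
    constructor
    · intro hw
      have hD : (Mk k).allocD Y true = some (wC k) := by
        apply Market.allocD_eq_some' (Mk k) _ _ (Sum.inr ()) hw rfl
        rintro (s | u) hy hdy
        · exact absurd hdy (by simp [Mk, mdoc])
        · rfl
      have hIR := hIRd true
      rw [hD] at hIR
      letI := P2
      rcases lt_trichotomy (none : Option ((Mk k).Xd true)) (some (wC k)) with h | h | h
      · exact h
      · exact absurd h (by simp)
      · exact absurd hIR (not_le_of_gt h)
    · intro hw
      by_contra hno
      have hD : (Mk k).allocD Y true = none := by
        apply Market.allocD_eq_none'
        rintro (s | u) hx hd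
        · exact absurd hd (by simp [Mk, mdoc])
        · cases u; exact hno hx
      have hH : (Mk k).allocH Y true = none := by
        apply Market.allocH_eq_none'
        rintro (s | u) hx hd
        · exact absurd hd (by simp [Mk, mhos])
        · cases u; exact hno hx
      refine hblock (Sum.inr ()) ⟨hno, ?_, ?_⟩
      · show P2.lt ((Mk k).allocD Y true) (some (wC k))
        rw [hD]; exact hw
      · show hrank k true ((Mk k).allocH Y true) < hrank k true (some ⟨Sum.inr (), rfl⟩)
        rw [hH]
        show 0 < 1
        omega
  refine ⟨t, ?_⟩
  ext x
  rw [mem_Sa]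
  constructor
  · intro hx
    rcases x with s | u
    · exact Or.inl (by rw [huniq s hx])
    · cases u; exact Or.inr ⟨hwiff.mp hx, rfl⟩
  · rintro (rfl | ⟨hw, rfl⟩)
    · exact ht
    · exact hwiff.mpr hw

lemma Sa_inj (P2 : (Mk k).DocPref true) : Function.Injective (Sa P2) := by
  intro t t' h
  have : (Sum.inl t : (Mk k).X) ∈ Sa P2 t' := h ▸ mem_Sa.mpr (Or.inl rfl)
  rcases mem_Sa.mp this with h' | ⟨_, h'⟩
  · exact Sum.inl.inj h'
  · exact absurd h' (by simp)

lemma stableSet_eq (hk : 0 < k) (P2 : (Mk k).DocPref true) :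
    (Mk k).stableSet (prof k (P1 k) P2) = Finset.image (Sa P2) Finset.univ := by
  classical
  ext Y
  unfold Market.stableSet
  rw [Finset.mem_filter, Finset.mem_image]
  constructor
  · rintro ⟨-, hY⟩
    obtain ⟨t, rfl⟩ := stable_eq_Sa hk P2 Y hY
    exact ⟨t, Finset.mem_univ t, rfl⟩
  · rintro ⟨t, -, rfl⟩
    exact ⟨Finset.mem_univ _, isStable_Sa P2 t⟩

lemma stableSet_card (hk : 0 < k) (P2 : (Mk k).DocPref true) :
    ((Mk k).stableSet (prof k (P1 k) P2)).card = k := by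
  rw [stableSet_eq hk P2, Finset.card_image_of_injective _ (Sa_inj P2), Finset.card_univ,
    Fintype.card_fin]

lemma stableSet_val (hk : 0 < k) (P2 : (Mk k).DocPref true) :
    ((Mk k).stableSet (prof k (P1 k) P2)).val = Finset.univ.val.map (Sa P2) := by
  rw [stableSet_eq hk P2, Finset.image_val, Multiset.dedup_eq_self.mpr]
  exact Finset.univ.nodup.map (Sa_inj P2)

lemma sort_helper {α : Type*} [L : LinearOrder α] (m : Multiset α) (l : List α)
    (hl : List.Pairwise (· ≥ ·) l) (hm : m = ↑l) : m.sort (· ≥ ·) = l := by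
  refine List.Perm.eq_of_pairwise' (Multiset.pairwise_sort _ _) hl ?_
  rw [← Multiset.coe_eq_coe, Multiset.sort_eq, hm]

lemma sorted_false (hk : 0 < k) (P2 : (Mk k).DocPref true) :
    (Mk k).sortedStable (prof k (P1 k) P2) false
      = (List.finRange k).map (fun t => some (xC k t)) := by
  unfold Market.sortedStable
  apply sort_helper (L := prof k (P1 k) P2 false)
  · rw [List.pairwise_map]
    refine (List.pairwise_lt_finRange k).imp ?_
    intro t s hts
    show drank1 k (some (xC k s)) ≤ drank1 k (some (xC k t))
    show k - s.val ≤ k - t.val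
    omega
  · rw [stableSet_val hk P2, Multiset.map_map]
    have : ((fun Y => (Mk k).allocD Y false) ∘ Sa P2) = fun t => some (xC k t) := by
      funext t; exact allocD_Sa_false P2 t
    rw [this]
    have huniv : (Finset.univ.val : Multiset (Fin k)) = ↑(List.finRange k) := by
      rfl
    rw [huniv, Multiset.map_coe]

lemma nthBest_false (hk : 2 ≤ k) (P2 : (Mk k).DocPref true) :
    (Mk k).nthBest (prof k (P1 k) P2) false 2 = some (xC k ⟨1, by omega⟩) := by
  unfold Market.nthBest
  rw [sorted_false (by omega) P2]
  rw [show (2 - 1 : ℕ) = 1 from rfl, List.getElem?_map]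
  rw [List.getElem?_eq_getElem (by simp; omega)]
  simp [List.getElem_finRange, Fin.cast]

end MkMarket

namespace MkMarket

/-- A rank realizing some preference for doctor `d2`. -/
def d2rank (k : ℕ) : Option ((Mk k).Xd true) → ℕ
  | none => 0
  | some ⟨Sum.inl _, _⟩ => 1
  | some ⟨Sum.inr _, _⟩ => 1

lemma d2rank_injective (k : ℕ) : Function.Injective (d2rank k) := by
  rintro (_ | ⟨(t | u), hx⟩) (_ | ⟨(s | v), hy⟩) hab
  · rfl
  · exact absurd hy (by simp [Mk, mdoc])
  · simp only [d2rank] at hab; omega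
  · exact absurd hx (by simp [Mk, mdoc])
  · exact absurd hx (by simp [Mk, mdoc])
  · exact absurd hx (by simp [Mk, mdoc])
  · simp only [d2rank] at hab; omega
  · exact absurd hy (by simp [Mk, mdoc])
  · exact congrArg some (Subtype.ext (by cases u; cases v; rfl))

/-- Some preference of doctor `d2`. -/
def P2def (k : ℕ) : (Mk k).DocPref true :=
  LinearOrder.lift' (d2rank k) (d2rank_injective k)

lemma update_prof (k : ℕ) (P : (Mk k).Prof) :
    Function.update P false (P1 k) = prof k (P1 k) (P true) := by
  funext d
  cases d with
  | false => exact Function.update_self (a := (false : (Mk k).D)) (v := P1 k) (f := P)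
  | true => exact Function.update_of_ne (a := (true : (Mk k).D)) (a' := (false : (Mk k).D)) (fun h => Bool.noConfusion h) (P1 k) P

end MkMarket

open MkMarket in
/-- In `M_k`, let `q ∈ (0,1]` satisfy `⌈kq⌉ = 2`. Then for every
preference `P2` of doctor `d2`, the `q`-quantile stable mechanism assigns contract `x²`
to doctor `d1` at the profile `(P1, P2)`; hence the option set of `d1` at `P1` under
`φ^q` is `O^{φ^q}(P1) = {x²}`. -/
theorem quantile_assigns_x2 (k : ℕ) (hk : 2 ≤ k)
    (q : ℝ) (hq0 : 0 < q) (hq1 : q ≤ 1) (hceil : ⌈(k : ℝ) * q⌉ = 2) :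
    (∀ P2 : (Mk k).DocPref true,
      (Mk k).assign ((Mk k).quantileMech q) (prof k (P1 k) P2) false =
        some (xC k ⟨1, by omega⟩)) ∧
    (Mk k).optionSet ((Mk k).quantileMech q) false (P1 k) = {some (xC k ⟨1, by omega⟩)} := by
  have hk1 : (1 : ℕ) < k := by omega
  have h1 : ∀ P2 : (Mk k).DocPref true,
      (Mk k).assign ((Mk k).quantileMech q) (prof k (P1 k) P2) false =
        some (xC k ⟨1, by omega⟩) := by
    intro P2
    set P := prof k (P1 k) P2 with hP
    have hcard : (((Mk k).stableSet P).card : ℝ) = (k : ℝ) := by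
      rw [stableSet_card (by omega) P2]
    have hnat : ⌈(k : ℝ) * q⌉₊ = 2 := by
      rw [← Int.ceil_toNat, hceil]; rfl
    have hj : max 1 ⌈(((Mk k).stableSet P).card : ℝ) * q⌉₊ = 2 := by
      rw [hcard, hnat]; rfl
    show (Mk k).allocD ((Mk k).quantileMech q P) false = _
    unfold Market.quantileMech
    rw [hj]
    have hnb := nthBest_false hk P2
    apply Market.allocD_eq_some' (Mk k) _ _ (Sum.inl ⟨1, hk1⟩) ?_ rfl ?_
    · refine Finset.mem_filter.mpr ⟨Finset.mem_univ _, ?_⟩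
      show (Mk k).nthBest P false 2 = some (xC k ⟨1, hk1⟩)
      exact hnb
    · rintro (s | u) hy hdy
      · have hy' := (Finset.mem_filter.mp hy).2
        have hy2 : (Mk k).nthBest P false 2 = some (⟨Sum.inl s, rfl⟩ : (Mk k).Xd false) := hy'
        rw [hnb] at hy2
        have := Subtype.ext_iff.mp (Option.some.inj hy2)
        simp only [xC] at this
        rw [← this]
      · exact absurd hdy (by simp [Mk, mdoc])
  refine ⟨h1, ?_⟩
  ext o
  simp only [Market.optionSet, Set.mem_setOf_eq, Set.mem_singleton_iff]
  constructor
  · rintro ⟨P, rfl⟩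
    rw [update_prof]
    exact h1 (P true)
  · intro ho
    refine ⟨prof k (P1 k) (P2def k), ?_⟩
    rw [update_prof, ho]
    exact (h1 _).symm
end

section
/- Every interior-stable mechanism is obviously manipulable: if φ is a mechanism that at every profile selects a stable allocation, and whenever a stable allocation exists that is neither the doctor-optimal nor the hospital-optimal stable allocation φ selects such an allocation, then there exist a one-to-one matching market with contracts, a doctor d, a true preference P_d, and a preference P_d′ such that P_d′ is an obvious manipulation of φ at P_d. -/
namespace OMAux

lemma allocD_eq_some (M : Market) (Y : Finset M.X) (d : M.D) (z : M.Xd d)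
    (hz : z.val ∈ Y) (huniq : ∀ x ∈ Y, x = z.val) : M.allocD Y d = some z := by
  have hex : ∃ x ∈ Y, M.doc x = d := ⟨z.val, hz, z.prop⟩
  rw [Market.allocD, dif_pos hex]
  exact congrArg some (Subtype.ext (huniq _ hex.choose_spec.1))

lemma allocD_eq_none (M : Market) (Y : Finset M.X) (d : M.D)
    (h : ¬ ∃ x ∈ Y, M.doc x = d) : M.allocD Y d = none := by
  rw [Market.allocD, dif_neg h]

lemma allocH_eq_some (M : Market) (Y : Finset M.X) (h : M.H) (z : M.Xh h)
    (hz : z.val ∈ Y) (huniq : ∀ x ∈ Y, x = z.val) : M.allocH Y h = some z := by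
  have hex : ∃ x ∈ Y, M.hos x = h := ⟨z.val, hz, z.prop⟩
  rw [Market.allocH, dif_pos hex]
  exact congrArg some (Subtype.ext (huniq _ hex.choose_spec.1))

lemma allocH_eq_none (M : Market) (Y : Finset M.X) (h : M.H)
    (hn : ¬ ∃ x ∈ Y, M.hos x = h) : M.allocH Y h = none := by
  rw [Market.allocH, dif_neg hn]

def rnkH : Option {x : Fin 3 // (fun (_ : Fin 3) => ()) x = ()} → ℕ
  | none => 0
  | some x => x.val.val + 1

abbrev Mkt : Market where
  X := Fin 3
  D := Unit
  H := Unit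
  doc := fun _ => ()
  hos := fun _ => ()
  hpref := fun h => match h with
    | () => LinearOrder.lift' rnkH (by decide)

def rnkD : Option (Mkt.Xd ()) → ℕ
  | none => 0
  | some x => 3 - x.val.val

def rnkD' : Option (Mkt.Xd ()) → ℕ
  | none => 2
  | some x => if x.val.val = 0 then 3 else if x.val.val = 1 then 1 else 0

def Pd : Mkt.DocPref () := LinearOrder.lift' rnkD (by decide)
def Pd' : Mkt.DocPref () := LinearOrder.lift' rnkD' (by decide)

def Pt : Mkt.Prof := fun d => match d with | () => Pd
def Pt' : Mkt.Prof := fun d => match d with | () => Pd'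

lemma update_eq (P : Mkt.Prof) : Function.update P () Pd = Pt := by
  funext d; cases d; simp [Pt, Function.update]

lemma update_eq' (P : Mkt.Prof) : Function.update P () Pd' = Pt' := by
  funext d; cases d; simp [Pt', Function.update]

lemma aD (k : Fin 3) (d : Unit) :
    Mkt.allocD ({k} : Finset Mkt.X) d = some ⟨k, by cases d; rfl⟩ :=
  allocD_eq_some Mkt {k} d _ (Finset.mem_singleton_self k)
    (fun _ hx => Finset.mem_singleton.mp hx)

lemma aH (k : Fin 3) (h : Unit) :
    Mkt.allocH ({k} : Finset Mkt.X) h = some ⟨k, by cases h; rfl⟩ :=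
  allocH_eq_some Mkt {k} h _ (Finset.mem_singleton_self k)
    (fun _ hx => Finset.mem_singleton.mp hx)

lemma aD0 (d : Unit) : Mkt.allocD (∅ : Finset Mkt.X) d = none :=
  allocD_eq_none Mkt ∅ d (by simp)

lemma aH0 (h : Unit) : Mkt.allocH (∅ : Finset Mkt.X) h = none :=
  allocH_eq_none Mkt ∅ h (by simp)

lemma stable_singleton (k : Fin 3) : Mkt.IsStable Pt {k} := by
  refine ⟨fun x hx y hy hne => absurd (Finset.mem_singleton.mp hx ▸
      Finset.mem_singleton.mp hy ▸ rfl) hne, ⟨?_, ?_⟩, ?_⟩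
  · intro d; rw [aD]; cases d
    exact Nat.zero_le _
  · intro h; rw [aH]; cases h
    exact Nat.zero_le _
  · rintro x ⟨hx, h1, h2⟩
    rw [aD] at h1; rw [aH] at h2
    have h1' : rnkD (some ⟨k, rfl⟩) < rnkD (some ⟨x, rfl⟩) := h1
    have h2' : rnkH (some ⟨k, rfl⟩) < rnkH (some ⟨x, rfl⟩) := h2
    simp only [rnkD, rnkH] at h1' h2'
    omega

end OMAux

namespace OMAux

abbrev c0 : Mkt.X := (0 : Fin 3)
abbrev c1 : Mkt.X := (1 : Fin 3)
abbrev c2 : Mkt.X := (2 : Fin 3)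

lemma classify (Y : Finset Mkt.X) (hY : Mkt.IsAllocation Y) :
    Y = ∅ ∨ ∃ k : Fin 3, Y = ({k} : Finset Mkt.X) := by
  rcases Y.eq_empty_or_nonempty with h | ⟨a, ha⟩
  · exact Or.inl h
  · refine Or.inr ⟨a, Finset.eq_singleton_iff_unique_mem.mpr ⟨ha, fun x hx => ?_⟩⟩
    by_contra hne
    exact (hY x hx a ha hne).1 rfl

lemma docOpt0 : Mkt.IsDoctorOptimal Pt ({c0} : Finset Mkt.X) := by
  refine ⟨stable_singleton 0, fun Z hZ d => ?_⟩
  rw [aD]; cases d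
  rcases classify Z hZ.1 with h | ⟨k, h⟩
  · subst h; rw [aD0]
    exact Nat.zero_le _
  · subst h; rw [aD]
    show rnkD (some ⟨k, rfl⟩) ≤ rnkD (some ⟨c0, rfl⟩)
    have h0 : (c0 : Fin 3).val = 0 := rfl
    simp only [rnkD]; omega

lemma hospOpt2 : Mkt.IsHospitalOptimal Pt ({c2} : Finset Mkt.X) := by
  refine ⟨stable_singleton 2, fun Z hZ h => ?_⟩
  rw [aH]; cases h
  rcases classify Z hZ.1 with h | ⟨k, h⟩
  · subst h; rw [aH0]
    exact Nat.zero_le _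
  · subst h; rw [aH]
    show rnkH (some ⟨k, rfl⟩) ≤ rnkH (some ⟨c2, rfl⟩)
    have := k.isLt
    have h2 : (c2 : Fin 3).val = 2 := rfl
    simp only [rnkH]; omega

lemma notDocOpt1 : ¬ Mkt.IsDoctorOptimal Pt ({c1} : Finset Mkt.X) := by
  rintro ⟨-, hopt⟩
  have h := hopt {c0} (stable_singleton 0) ()
  rw [aD, aD] at h
  exact absurd (h : rnkD (some ⟨c0, rfl⟩) ≤ rnkD (some ⟨c1, rfl⟩)) (by decide)

lemma notHospOpt1 : ¬ Mkt.IsHospitalOptimal Pt ({c1} : Finset Mkt.X) := by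
  rintro ⟨-, hopt⟩
  have h := hopt {c2} (stable_singleton 2) ()
  rw [aH, aH] at h
  exact absurd (h : rnkH (some ⟨c2, rfl⟩) ≤ rnkH (some ⟨c1, rfl⟩)) (by decide)

lemma blocks0_empty : Mkt.Blocks Pt (∅ : Finset Mkt.X) c0 := by
  refine ⟨by simp, ?_, ?_⟩
  · rw [aD0]
    show rnkD none < rnkD (some ⟨c0, rfl⟩); decide
  · rw [aH0]
    show rnkH none < rnkH (some ⟨c0, rfl⟩); decide

lemma blocks0_empty' : Mkt.Blocks Pt' (∅ : Finset Mkt.X) c0 := by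
  refine ⟨by simp, ?_, ?_⟩
  · rw [aD0]
    show rnkD' none < rnkD' (some ⟨c0, rfl⟩); decide
  · rw [aH0]
    show rnkH none < rnkH (some ⟨c0, rfl⟩); decide

lemma phi_Pt (φ : Mkt.Mech) (hst : Mkt.IsStable Pt (φ Pt))
    (hnd : ¬ Mkt.IsDoctorOptimal Pt (φ Pt)) (hnh : ¬ Mkt.IsHospitalOptimal Pt (φ Pt)) :
    φ Pt = ({c1} : Finset Mkt.X) := by
  rcases classify (φ Pt) hst.1 with h | ⟨k, h⟩
  · exact absurd blocks0_empty (h ▸ hst.2.2 c0)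
  · fin_cases k
    · exact absurd (h.symm ▸ docOpt0) hnd
    · exact h
    · exact absurd (h.symm ▸ hospOpt2) hnh

lemma phi_Pt' (φ : Mkt.Mech) (hst : Mkt.IsStable Pt' (φ Pt')) :
    φ Pt' = ({c0} : Finset Mkt.X) := by
  rcases classify (φ Pt') hst.1 with h | ⟨k, h⟩
  · exact absurd blocks0_empty' (h ▸ hst.2.2 c0)
  · fin_cases k
    · exact h
    · have hir := hst.2.1.1 ()
      rw [h, aD] at hir
      exact absurd (hir : rnkD' none ≤ rnkD' (some ⟨c1, rfl⟩)) (by decide)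
    · have hir := hst.2.1.1 ()
      rw [h, aD] at hir
      exact absurd (hir : rnkD' none ≤ rnkD' (some ⟨c2, rfl⟩)) (by decide)

end OMAux

namespace OMAux

lemma assign_upd (φ : ∀ M : Market, M.Mech)
    (hφ : φ Mkt Pt = ({c1} : Finset Mkt.X)) (P : Mkt.Prof) :
    Mkt.assign (φ Mkt) (Function.update P () Pd) () = some ⟨c1, rfl⟩ := by
  show Mkt.allocD (φ Mkt (Function.update P () Pd)) () = _
  rw [update_eq, hφ, aD]

lemma assign_upd' (φ : ∀ M : Market, M.Mech)
    (hφ : φ Mkt Pt' = ({c0} : Finset Mkt.X)) (P : Mkt.Prof) :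
    Mkt.assign (φ Mkt) (Function.update P () Pd') () = some ⟨c0, rfl⟩ := by
  show Mkt.allocD (φ Mkt (Function.update P () Pd')) () = _
  rw [update_eq', hφ, aD]

end OMAux

open OMAux

/-- Every interior-stable mechanism is obviously manipulable: if `φ`
(defined on every one-to-one matching market with contracts) selects a stable allocation
at every profile, and selects an allocation that is neither doctor-optimal nor
hospital-optimal whenever such a stable allocation exists, then there are a market,
a doctor `d`, a true preference `Pd` and a preference `Pd'` such that `Pd'` is an
obvious manipulation of `φ` at `Pd`. -/
theorem interior_stable_obviously_manipulable
    (φ : ∀ M : Market, M.Mech)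
    (hstable : ∀ (M : Market) (P : M.Prof), M.IsStable P (φ M P))
    (hinterior : ∀ (M : Market) (P : M.Prof),
      (∃ Y : Finset M.X, M.IsStable P Y ∧
        ¬ M.IsDoctorOptimal P Y ∧ ¬ M.IsHospitalOptimal P Y) →
      ¬ M.IsDoctorOptimal P (φ M P) ∧ ¬ M.IsHospitalOptimal P (φ M P)) :
    ∃ (M : Market) (d : M.D) (Pd Pd' : M.DocPref d),
      M.IsObviousManipulation (φ M) d Pd Pd' := by

  obtain ⟨hnd, hnh⟩ := hinterior Mkt Pt
    ⟨{c1}, stable_singleton 1, notDocOpt1, notHospOpt1⟩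
  have hT : φ Mkt Pt = ({c1} : Finset Mkt.X) :=
    phi_Pt (φ Mkt) (hstable Mkt Pt) hnd hnh
  have hT' : φ Mkt Pt' = ({c0} : Finset Mkt.X) :=
    phi_Pt' (φ Mkt) (hstable Mkt Pt')
  refine ⟨Mkt, (), Pd, Pd', ⟨Pt, ?_⟩, Or.inl ?_⟩
  · rw [assign_upd φ hT Pt, assign_upd' φ hT' Pt]
    show rnkD (some ⟨c1, rfl⟩) < rnkD (some ⟨c0, rfl⟩)
    decide
  · refine ⟨some ⟨c0, rfl⟩, some ⟨c1, rfl⟩,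
      ⟨⟨Pt', (assign_upd' φ hT' Pt').symm⟩, ?_⟩,
      ⟨⟨Pt, (assign_upd φ hT Pt).symm⟩, ?_⟩, ?_⟩
    · rintro b ⟨P, rfl⟩
      rw [assign_upd' φ hT' P]
      exact Pd.le_refl _
    · rintro b ⟨P, rfl⟩
      rw [assign_upd φ hT P]
      exact Pd.le_refl _
    · show rnkD (some ⟨c1, rfl⟩) < rnkD (some ⟨c0, rfl⟩)
      decide
end
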